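/- Let μ > 0 and let N ≥ 2 be an integer. Then the double sum over integers 1 ≤ k ≤ j − 3 ≤ N with j − k < 2k of (j−k)⁻¹ · k^{μ−1} · N^{−μ} is bounded above by C · log N for a constant C depending only on μ. -/

import Mathlib

/-!
For fixed `k` the inner sum runs over distinct values `j - k ∈ [1, N]`, so it is at most the
harmonic number `H_N ≤ 1 + log N`. What is left is `N^(-μ) ∑_{k ≤ N} k^(μ-1)`, which is bounded
by `1 / min μ 1` because `min μ 1 · k^(μ-1) ≤ k^μ - (k-1)^μ` telescopes to `N^μ`.
-/

open Finset Real

lemma sum_Icc_inv_le_one_add_log (N : ℕ) : ∑ d ∈ Icc 1 N, (d : ℝ)⁻¹ ≤ 1 + log N := by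
  simpa [harmonic_eq_sum_Icc] using harmonic_le_one_add_log N

lemma sum_inv_sub_le_one_add_log {k N : ℕ} {s : Finset ℕ} (hs : s ⊆ Ioc k N) :
    ∑ j ∈ s, ((j : ℝ) - k)⁻¹ ≤ 1 + log N := by
  have hmem : ∀ j ∈ s, k < j ∧ j ≤ N := fun j hj => mem_Ioc.mp (hs hj)
  calc ∑ j ∈ s, ((j : ℝ) - k)⁻¹ = ∑ d ∈ s.image (· - k), (d : ℝ)⁻¹ := by
        rw [sum_image fun a ha b hb hab => by
          have := hmem a ha; have := hmem b hb; omega]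
        refine sum_congr rfl fun j hj => ?_
        rw [Nat.cast_sub (hmem j hj).1.le]
    _ ≤ ∑ d ∈ Icc 1 N, (d : ℝ)⁻¹ := by
        refine sum_le_sum_of_subset_of_nonneg (fun d hd => ?_) fun d _ _ => by positivity
        obtain ⟨j, hj, rfl⟩ := mem_image.mp hd
        have := hmem j hj
        exact mem_Icc.mpr ⟨by omega, by omega⟩
    _ ≤ 1 + log N := sum_Icc_inv_le_one_add_log N

lemma min_mul_rpow_sub_one_le_rpow_sub_rpow {μ x : ℝ} (hμ : 0 < μ) (hx : 1 ≤ x) :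
    min μ 1 * x ^ (μ - 1) ≤ x ^ μ - (x - 1) ^ μ := by
  have hx0 : 0 < x := by linarith
  have hxμ : x ^ μ = x * x ^ (μ - 1) := by
    rw [rpow_sub hx0, rpow_one, mul_div_cancel₀ _ hx0.ne']
  rcases le_total μ 1 with hμ1 | hμ1
  · -- Bernoulli: `(1 - 1/x)^μ ≤ 1 - μ/x`
    have hbern := rpow_one_add_le_one_add_mul_self (s := -x⁻¹)
      (by linarith [inv_le_one_of_one_le₀ hx]) hμ.le hμ1
    have hsplit : (x - 1) ^ μ = (1 + -x⁻¹) ^ μ * x ^ μ := by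
      rw [← mul_rpow (by linarith [inv_le_one_of_one_le₀ hx]) hx0.le]
      congr 1; field_simp; ring
    rw [min_eq_left hμ1, hsplit]
    have := mul_le_mul_of_nonneg_right hbern (rpow_nonneg hx0.le μ)
    rw [hxμ] at this ⊢
    have : (1 + μ * -x⁻¹) * (x * x ^ (μ - 1)) = x * x ^ (μ - 1) - μ * x ^ (μ - 1) := by
      field_simp; ring
    linarith
  · have hx1 : (x - 1) ^ μ ≤ (x - 1) * x ^ (μ - 1) := by
      have hsplit : (x - 1) ^ μ = (x - 1) * (x - 1) ^ (μ - 1) := by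
        rw [← rpow_one_add' (by linarith) (by linarith)]
        ring_nf
      rw [hsplit]
      gcongr
      linarith
    rw [min_eq_right hμ1, hxμ]
    linarith

lemma min_mul_sum_Icc_rpow_sub_one_le {μ : ℝ} (hμ : 0 < μ) (N : ℕ) :
    min μ 1 * ∑ k ∈ Icc 1 N, (k : ℝ) ^ (μ - 1) ≤ (N : ℝ) ^ μ := by
  induction N with
  | zero => simp [zero_rpow hμ.ne']
  | succ N ih =>
    have hstep := min_mul_rpow_sub_one_le_rpow_sub_rpow hμ (x := (N + 1 : ℕ)) (by simp)
    rw [sum_Icc_succ_top (by omega), mul_add]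
    push_cast at hstep ⊢
    rw [add_sub_cancel_right] at hstep
    linarith

lemma one_add_log_le_mul_log {x : ℝ} (hx : 2 ≤ x) :
    1 + log x ≤ (1 + (log 2)⁻¹) * log x := by
  have hlog2 : 0 < log 2 := log_pos one_lt_two
  have : 1 ≤ (log 2)⁻¹ * log x := by
    rw [inv_mul_eq_div, one_le_div hlog2]
    exact log_le_log two_pos hx
  linarith

/-- Case 1 summation estimate: for μ > 0, the double sum over 1 ≤ k ≤ j - 3 ≤ N
with j - k < 2k of (j-k)⁻¹ · k^(μ-1) · N^(-μ) is at most C(μ) · log N. -/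
theorem stmt3 (μ : ℝ) (hμ : 0 < μ) :
    ∃ C : ℝ, 0 < C ∧ ∀ N : ℕ, 2 ≤ N →
      ∑ k ∈ Finset.Icc 1 N,
        ∑ j ∈ (Finset.Icc (k + 3) N).filter (fun j => j - k < 2 * k),
          ((j : ℝ) - (k : ℝ))⁻¹ * (k : ℝ) ^ (μ - 1) * (N : ℝ) ^ (-μ)
        ≤ C * Real.log N := by
  have hmin : 0 < min μ 1 := lt_min hμ one_pos
  refine ⟨(1 + (log 2)⁻¹) / min μ 1, by positivity, fun N hN => ?_⟩
  have hN2 : (2 : ℝ) ≤ N := by exact_mod_cast hN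
  have hNμ : (N : ℝ) ^ (-μ) * ∑ k ∈ Icc 1 N, (k : ℝ) ^ (μ - 1) ≤ (min μ 1)⁻¹ := by
    rw [rpow_neg (by positivity), inv_mul_le_iff₀ (by positivity), ← div_eq_mul_inv,
      le_div_iff₀ hmin, mul_comm]
    exact min_mul_sum_Icc_rpow_sub_one_le hμ N
  calc _ ≤ ∑ k ∈ Icc 1 N, (1 + log N) * ((k : ℝ) ^ (μ - 1) * (N : ℝ) ^ (-μ)) := by
        refine sum_le_sum fun k _ => ?_
        simp_rw [mul_assoc, ← sum_mul]
        gcongr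
        refine sum_inv_sub_le_one_add_log ((filter_subset _ _).trans fun j hj => ?_)
        rw [mem_Icc] at hj
        exact mem_Ioc.mpr ⟨by omega, hj.2⟩
    _ = (1 + log N) * ((N : ℝ) ^ (-μ) * ∑ k ∈ Icc 1 N, (k : ℝ) ^ (μ - 1)) := by
        rw [← mul_sum, mul_sum _ _ ((N : ℝ) ^ (-μ))]
        simp_rw [mul_comm]
    _ ≤ (1 + log N) * (min μ 1)⁻¹ := by gcongr
    _ ≤ (1 + (log 2)⁻¹) / min μ 1 * log N := by
        rw [div_mul_eq_mul_div, ← div_eq_mul_inv]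
        gcongr
        exact one_add_log_le_mul_log hN2
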